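/- Let X be a graph as in the context and fix a vertex x₀. Then N₄(x₀) = c₄(x₀) − (deg(x₀)−2)·c₂(x₀) + (Δ_X c₂)(x₀). -/

import Mathlib

/-- A graph in the sense of Serre: an edge set with origin/terminus maps and a
fixed-point-free involution `bar` satisfying `o e = t (bar e)`.
Loops and multiple edges are allowed. -/
structure SerreGraph where
  V : Type
  E : Type
  o : E → V
  t : E → V
  bar : E → E
  bar_ne : ∀ e, bar e ≠ e
  bar_bar : ∀ e, bar (bar e) = e
  o_bar : ∀ e, o e = t (bar e)

namespace SerreGraph

variable (X : SerreGraph)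

/-- The set of edges emanating from `x`. -/
def edgesAt (x : X.V) : Set X.E := {e | X.o e = x}

/-- The degree of a vertex. -/
noncomputable def deg (x : X.V) : ℕ := Nat.card (X.edgesAt x)

/-- A sequence of `m` edges is a path when consecutive edges are composable. -/
def IsPath {m : ℕ} (p : Fin m → X.E) : Prop :=
  ∀ (i : ℕ) (h : i + 1 < m), X.t (p ⟨i, by omega⟩) = X.o (p ⟨i + 1, h⟩)

/-- No backtracking: no edge is followed by its reversal. -/
def NoBacktrack {m : ℕ} (p : Fin m → X.E) : Prop :=
  ∀ (i : ℕ) (h : i + 1 < m), p ⟨i + 1, h⟩ ≠ X.bar (p ⟨i, by omega⟩)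

/-- A geodesic loop at `x`: a closed path starting and ending at `x` with no
backtracking. -/
def IsGeodesicLoopAt {m : ℕ} (x : X.V) (p : Fin m → X.E) : Prop :=
  X.IsPath p ∧ X.NoBacktrack p ∧
    ∀ (h : 0 < m), X.o (p ⟨0, h⟩) = x ∧ X.t (p ⟨m - 1, by omega⟩) = x

/-- A path has a tail when its last edge is the reversal of its first edge. -/
def HasTail {m : ℕ} (p : Fin m → X.E) : Prop :=
  ∃ (h : 0 < m), p ⟨m - 1, by omega⟩ = X.bar (p ⟨0, h⟩)

/-- `c m x` is the number of geodesic loops of length `m` starting at `x`. -/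
noncomputable def c (m : ℕ) (x : X.V) : ℕ :=
  Nat.card {p : Fin m → X.E // X.IsGeodesicLoopAt x p}

/-- `N m x` is the number of closed geodesics of length `m` starting at `x`,
i.e. geodesic loops with no tail. -/
noncomputable def N (m : ℕ) (x : X.V) : ℕ :=
  Nat.card {p : Fin m → X.E // X.IsGeodesicLoopAt x p ∧ ¬ X.HasTail p}

/-- The formal combinatorial Laplacian applied to a function on vertices:
`(Δ f)(x) = deg(x)·f(x) − Σ_{e ∈ E_x} f(t(e))`. -/
noncomputable def lap (f : X.V → ℤ) (x : X.V) : ℤ :=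
  (X.deg x : ℤ) * f x - ∑ᶠ e ∈ X.edgesAt x, f (X.t e)

/-- Connectedness: any two vertices are joined by a path. -/
def Connected : Prop :=
  ∀ x y : X.V, x = y ∨ ∃ (m : ℕ) (p : Fin m → X.E) (h : 0 < m),
    X.IsPath p ∧ X.o (p ⟨0, h⟩) = x ∧ X.t (p ⟨m - 1, by omega⟩) = y

end SerreGraph

/-!
A tailed geodesic 4-loop at `x₀` is `(e, f, g, ē)` where `e ∈ E_{x₀}` and `(f, g)` is a geodesic
2-loop at `t e` with `f ≠ ē` and `g ≠ e`. The remaining 2-loops at `t e` are those starting with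
`ē` and those ending with `e` (never both, by non-backtracking), and each kind is in bijection with
the edges parallel to `e`; over `e ∈ E_{x₀}` these parallel pairs `(e, g)` are exactly the 2-loops
`(e, ḡ)` at `x₀`. Hence `∑_{e ∈ E_{x₀}} c₂(t e) = 2 c₂(x₀) + (c₄(x₀) - N₄(x₀))`, which is the
formula once the Laplacian is expanded.
-/

theorem Nat.card_subtype_eq_card_and_add_card_and_not {α : Type*} {P : α → Prop}
    (hP : {a | P a}.Finite) (Q : α → Prop) :
    Nat.card {a // P a} = Nat.card {a // P a ∧ Q a} + Nat.card {a // P a ∧ ¬ Q a} :=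
  (Set.ncard_inter_add_ncard_sdiff_eq_ncard {a | P a} {a | Q a} hP).symm

namespace SerreGraph

variable {X : SerreGraph}

theorem bar_injective : Function.Injective X.bar :=
  Function.LeftInverse.injective X.bar_bar

@[simp]
theorem bar_inj {e f : X.E} : X.bar e = X.bar f ↔ e = f :=
  bar_injective.eq_iff

@[simp]
theorem t_bar (e : X.E) : X.t (X.bar e) = X.o e :=
  (X.o_bar e).symm

@[simp]
theorem o_bar_eq_t (e : X.E) : X.o (X.bar e) = X.t e := by
  rw [X.o_bar, X.bar_bar]

variable (X) in
def reachableEdges (x : X.V) : ℕ → Set X.E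
  | 0 => X.edgesAt x
  | k + 1 => ⋃ e ∈ reachableEdges x k, X.edgesAt (X.t e)

theorem finite_reachableEdges (hfin : ∀ x : X.V, (X.edgesAt x).Finite) (x : X.V) (k : ℕ) :
    (X.reachableEdges x k).Finite := by
  induction k with
  | zero => exact hfin x
  | succ k ih => exact ih.biUnion fun e _ => hfin (X.t e)

theorem IsPath.mem_reachableEdges {m : ℕ} {p : Fin m → X.E} (hp : X.IsPath p) {x : X.V}
    (hx : ∀ h : 0 < m, X.o (p ⟨0, h⟩) = x) (i : Fin m) : p i ∈ X.reachableEdges x i := by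
  obtain ⟨i, hi⟩ := i
  induction i with
  | zero => exact hx hi
  | succ k ih => exact Set.mem_biUnion (ih (by omega)) (hp k hi).symm

theorem finite_setOf_isPath (hfin : ∀ x : X.V, (X.edgesAt x).Finite) (x : X.V) (m : ℕ) :
    {p : Fin m → X.E | X.IsPath p ∧ ∀ h : 0 < m, X.o (p ⟨0, h⟩) = x}.Finite :=
  (Set.Finite.pi fun i : Fin m => finite_reachableEdges hfin x i).subset
    fun _ hp => Set.mem_univ_pi.2 (hp.1.mem_reachableEdges hp.2)

theorem finite_setOf_isGeodesicLoopAt (hfin : ∀ x : X.V, (X.edgesAt x).Finite) (x : X.V)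
    (m : ℕ) : {p : Fin m → X.E | X.IsGeodesicLoopAt x p}.Finite :=
  (finite_setOf_isPath hfin x m).subset fun _ hp => ⟨hp.1, fun h => (hp.2.2 h).1⟩

theorem c_eq_card_hasTail_add_N (hfin : ∀ x : X.V, (X.edgesAt x).Finite) (m : ℕ) (x : X.V) :
    X.c m x = Nat.card {p : Fin m → X.E // X.IsGeodesicLoopAt x p ∧ X.HasTail p} + X.N m x :=
  Nat.card_subtype_eq_card_and_add_card_and_not (finite_setOf_isGeodesicLoopAt hfin x m) _

theorem isGeodesicLoopAt_two_iff {x : X.V} {p : Fin 2 → X.E} :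
    X.IsGeodesicLoopAt x p ↔
      X.o (p 0) = x ∧ X.t (p 0) = X.o (p 1) ∧ X.t (p 1) = x ∧ p 1 ≠ X.bar (p 0) := by
  simp only [IsGeodesicLoopAt, IsPath, NoBacktrack]
  constructor
  · rintro ⟨hpath, hback, hends⟩
    exact ⟨(hends two_pos).1, hpath 0 one_lt_two, (hends two_pos).2, hback 0 one_lt_two⟩
  · rintro ⟨h₀, h₁, h₂, h₃⟩
    refine ⟨fun i hi => ?_, fun i hi => ?_, fun _ => ⟨h₀, h₂⟩⟩ <;>
    · obtain rfl : i = 0 := by omega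
      assumption

theorem isGeodesicLoopAt_four_iff {x : X.V} {p : Fin 4 → X.E} :
    X.IsGeodesicLoopAt x p ↔
      X.o (p 0) = x ∧ X.t (p 0) = X.o (p 1) ∧ X.t (p 1) = X.o (p 2) ∧
        X.t (p 2) = X.o (p 3) ∧ X.t (p 3) = x ∧
        p 1 ≠ X.bar (p 0) ∧ p 2 ≠ X.bar (p 1) ∧ p 3 ≠ X.bar (p 2) := by
  simp only [IsGeodesicLoopAt, IsPath, NoBacktrack]
  constructor
  · rintro ⟨hpath, hback, hends⟩
    exact ⟨(hends four_pos).1, hpath 0 (by norm_num), hpath 1 (by norm_num),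
      hpath 2 (by norm_num), (hends four_pos).2, hback 0 (by norm_num), hback 1 (by norm_num),
      hback 2 (by norm_num)⟩
  · rintro ⟨h₀, h₁, h₂, h₃, h₄, h₅, h₆, h₇⟩
    refine ⟨fun i hi => ?_, fun i hi => ?_, fun _ => ⟨h₀, h₄⟩⟩ <;>
    · obtain rfl | rfl | rfl : i = 0 ∨ i = 1 ∨ i = 2 := by omega
      all_goals assumption

theorem hasTail_four_iff {p : Fin 4 → X.E} : X.HasTail p ↔ p 3 = X.bar (p 0) :=
  ⟨fun ⟨_, h⟩ => h, fun h => ⟨four_pos, h⟩⟩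

variable (X)

def parallelEdges (e : X.E) : Set X.E :=
  {g | X.o g = X.o e ∧ X.t g = X.t e ∧ g ≠ e}

/-- Exactly the 2-loops `q` at `t e` for which `(e, q 0, q 1, bar e)` is a geodesic loop. -/
def twoLoopsAvoiding (e : X.E) : Set (Fin 2 → X.E) :=
  {q | X.IsGeodesicLoopAt (X.t e) q ∧ q 0 ≠ X.bar e ∧ q 1 ≠ e}

variable {X}

theorem card_twoLoops_head_eq_bar (e : X.E) :
    Nat.card {q : Fin 2 → X.E // X.IsGeodesicLoopAt (X.t e) q ∧ q 0 = X.bar e} =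
      Nat.card (X.parallelEdges e) :=
  Nat.card_congr
    { toFun := fun q => ⟨q.1 1, by
        obtain ⟨-, h₁, h₂, h₃⟩ := isGeodesicLoopAt_two_iff.1 q.2.1
        rw [q.2.2, X.bar_bar] at h₃
        exact ⟨by rw [← h₁, q.2.2, t_bar], h₂, h₃⟩⟩
      invFun := fun g => ⟨![X.bar e, g], by
        obtain ⟨h₁, h₂, h₃⟩ := g.2
        simp [isGeodesicLoopAt_two_iff, h₁, h₂, h₃, X.bar_bar]⟩
      left_inv := fun q => Subtype.ext (funext fun i => by fin_cases i <;> simp [q.2.2])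
      right_inv := fun g => rfl }

theorem card_twoLoops_last_eq (e : X.E) :
    Nat.card {q : Fin 2 → X.E //
        (X.IsGeodesicLoopAt (X.t e) q ∧ q 0 ≠ X.bar e) ∧ q 1 = e} =
      Nat.card (X.parallelEdges e) :=
  Nat.card_congr
    { toFun := fun q => ⟨X.bar (q.1 0), by
        obtain ⟨⟨hq, hne⟩, hlast⟩ := q.2
        obtain ⟨h₀, h₁, -, -⟩ := isGeodesicLoopAt_two_iff.1 hq
        refine ⟨by rw [o_bar_eq_t, h₁, hlast], by rw [t_bar, h₀], fun h => hne ?_⟩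
        rw [← X.bar_bar (q.1 0), h]⟩
      invFun := fun g => ⟨![X.bar g, e], by
        obtain ⟨h₁, h₂, h₃⟩ := g.2
        simp [isGeodesicLoopAt_two_iff, h₁, h₂, X.bar_bar, h₃, Ne.symm h₃]⟩
      left_inv := fun q => Subtype.ext (funext fun i => by fin_cases i <;> simp [q.2.2, X.bar_bar])
      right_inv := fun g => Subtype.ext (X.bar_bar g) }

theorem c_two_t_eq (hfin : ∀ x : X.V, (X.edgesAt x).Finite) (e : X.E) :
    X.c 2 (X.t e) = 2 * Nat.card (X.parallelEdges e) + Nat.card (X.twoLoopsAvoiding e) := by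
  have hloops := finite_setOf_isGeodesicLoopAt hfin (X.t e) 2
  have hsplit_head := Nat.card_subtype_eq_card_and_add_card_and_not hloops fun q => q 0 = X.bar e
  have hsplit_last := Nat.card_subtype_eq_card_and_add_card_and_not
    (P := fun q => X.IsGeodesicLoopAt (X.t e) q ∧ q 0 ≠ X.bar e) (hloops.subset fun _ hq => hq.1)
    fun q => q 1 = e
  have havoiding : Nat.card {q : Fin 2 → X.E //
      (X.IsGeodesicLoopAt (X.t e) q ∧ q 0 ≠ X.bar e) ∧ q 1 ≠ e} =
        Nat.card (X.twoLoopsAvoiding e) :=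
    Nat.card_congr (Equiv.subtypeEquivRight fun _ => and_assoc)
  rw [c, hsplit_head, hsplit_last, card_twoLoops_head_eq_bar, card_twoLoops_last_eq, havoiding]
  ring

theorem sum_card_parallelEdges (hfin : ∀ x : X.V, (X.edgesAt x).Finite) (x : X.V)
    [Fintype (X.edgesAt x)] :
    ∑ e : X.edgesAt x, Nat.card (X.parallelEdges e) = X.c 2 x := by
  have (e : X.edgesAt x) : Finite (X.parallelEdges e) :=
    ((hfin x).subset fun g hg => hg.1.trans e.2).to_subtype
  rw [← Nat.card_sigma]
  exact Nat.card_congr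
    { toFun := fun s => ⟨![s.1, X.bar s.2], by
        obtain ⟨⟨e, he : X.o e = x⟩, g, h₁, h₂, h₃⟩ := s
        exact isGeodesicLoopAt_two_iff.2 ⟨he, by simp [h₂], by simp [h₁, he], by simpa using h₃⟩⟩
      invFun := fun q => ⟨⟨q.1 0, (isGeodesicLoopAt_two_iff.1 q.2).1⟩, ⟨X.bar (q.1 1), by
        obtain ⟨h₀, h₁, h₂, h₃⟩ := isGeodesicLoopAt_two_iff.1 q.2
        exact ⟨by simp [h₀, h₂], by simp [h₁],
          fun h => h₃ (X.bar_injective (by rw [h, X.bar_bar]))⟩⟩⟩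
      left_inv := fun s => by simp [X.bar_bar]
      right_inv := fun q => Subtype.ext (funext fun i => by fin_cases i <;> simp [X.bar_bar]) }

theorem sum_card_twoLoopsAvoiding (hfin : ∀ x : X.V, (X.edgesAt x).Finite) (x : X.V)
    [Fintype (X.edgesAt x)] :
    ∑ e : X.edgesAt x, Nat.card (X.twoLoopsAvoiding e) =
      Nat.card {p : Fin 4 → X.E // X.IsGeodesicLoopAt x p ∧ X.HasTail p} := by
  have (e : X.edgesAt x) : Finite (X.twoLoopsAvoiding e) :=
    ((finite_setOf_isGeodesicLoopAt hfin _ 2).subset fun _ hq => hq.1).to_subtype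
  rw [← Nat.card_sigma]
  exact Nat.card_congr
    { toFun := fun s => ⟨![s.1, s.2.1 0, s.2.1 1, X.bar s.1], by
        obtain ⟨⟨e, he : X.o e = x⟩, q, hq, h₄, h₅⟩ := s
        obtain ⟨h₀, h₁, h₂, h₃⟩ := isGeodesicLoopAt_two_iff.1 hq
        refine ⟨isGeodesicLoopAt_four_iff.2 ⟨he, ?_, ?_, ?_, ?_, ?_, ?_, ?_⟩, hasTail_four_iff.2 rfl⟩
        all_goals simp [h₀, h₁, h₂, he, h₃, h₄, Ne.symm h₅]⟩
      invFun := fun p => ⟨⟨p.1 0, (isGeodesicLoopAt_four_iff.1 p.2.1).1⟩, ⟨![p.1 1, p.1 2], by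
        obtain ⟨-, h₁, h₂, h₃, -, h₅, h₆, h₇⟩ := isGeodesicLoopAt_four_iff.1 p.2.1
        have htail := hasTail_four_iff.1 p.2.2
        have hback : X.t (p.1 2) = X.t (p.1 0) := by rw [h₃, htail, o_bar_eq_t]
        exact ⟨isGeodesicLoopAt_two_iff.2 ⟨h₁.symm, h₂, hback, h₆⟩, h₅,
          fun h => h₇ (htail.trans (congrArg X.bar h.symm))⟩⟩⟩
      left_inv := fun s => Sigma.ext rfl <| heq_of_eq <| Subtype.ext <| funext fun i => by
        fin_cases i <;> rfl
      right_inv := fun p => Subtype.ext (funext fun i => by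
        fin_cases i <;> simp [(hasTail_four_iff.1 p.2.2).symm]) }

theorem lap_eq_sum (f : X.V → ℤ) (x : X.V) [Fintype (X.edgesAt x)] :
    X.lap f x = X.deg x * f x - ∑ e : X.edgesAt x, f (X.t e) := by
  rw [lap, ← finsum_set_coe_eq_finsum_mem, finsum_eq_sum_of_fintype]

end SerreGraph

open SerreGraph in
theorem N_four_formula_general (X : SerreGraph)
    (hfin : ∀ x : X.V, (X.edgesAt x).Finite)
    (x₀ : X.V) :
    (X.N 4 x₀ : ℤ) =
      (X.c 4 x₀ : ℤ) - ((X.deg x₀ : ℤ) - 2) * X.c 2 x₀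
        + X.lap (fun x => (X.c 2 x : ℤ)) x₀ := by
  have : Fintype (X.edgesAt x₀) := (hfin x₀).fintype
  have hsum : ∑ e : X.edgesAt x₀, X.c 2 (X.t e) =
      2 * X.c 2 x₀ + Nat.card {p : Fin 4 → X.E // X.IsGeodesicLoopAt x₀ p ∧ X.HasTail p} := by
    simp only [c_two_t_eq hfin, Finset.sum_add_distrib, ← Finset.mul_sum,
      sum_card_parallelEdges hfin, sum_card_twoLoopsAvoiding hfin]
  rw [lap_eq_sum, c_eq_card_hasTail_add_N hfin 4 x₀]
  push_cast
  rw [← Nat.cast_sum, hsum]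
  push_cast
  ring

/-- `N₄(x₀) = c₄(x₀) − (deg(x₀)−2)·c₂(x₀) + (Δ_X c₂)(x₀)`. -/
theorem N_four_formula (X : SerreGraph) [Countable X.V]
    (hconn : X.Connected)
    (hfin : ∀ x : X.V, (X.edgesAt x).Finite)
    (hbd : ∃ M : ℕ, ∀ x : X.V, X.deg x ≤ M)
    (hdeg1 : ∀ x : X.V, X.deg x ≠ 1)
    (x₀ : X.V) :
    (X.N 4 x₀ : ℤ) =
      (X.c 4 x₀ : ℤ) - ((X.deg x₀ : ℤ) - 2) * X.c 2 x₀
        + X.lap (fun x => (X.c 2 x : ℤ)) x₀ :=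
  N_four_formula_general X hfin x₀
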